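/- Let G be a graph with m edges and H' the split graph obtained from the bipartite reduction graph H (vertices x_v, y_e with y_e adjacent to the x-vertices of its endpoints, and m² leaves per y_e) by adding all edges between distinct y-vertices, making Y a clique. If G has a 2-coloring with exactly k₁ red and exactly k₂ blue edges (k₁ + k₂ ≤ m), then H' has a 2-coloring with at least 2k₁ + m²k₁ + C(k₁, 2) red edges and at least (m + k₂ - k₁) + (m - k₁)m² + C(m - k₁, 2) blue edges. -/

import Mathlib

/-
Color `x_v` by `f v`, and `y_e` together with its `m²` leaves red iff `e` is red in `G`.
For a color `c`, let `A` be the set of edges `e` with `y_e` of color `c`: the leaves give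
`#A * m²` monochromatic edges and the clique on `{y_e | e ∈ A}` gives `C(#A, 2)`, while the
`x`–`y` edges of color `c` are indexed by the darts `(u, e)` with `x_u` and `y_e` of color `c`.
On the red side `#A = k₁` and every red edge yields two such darts. On the blue side
`#A = m - k₁`, and summing the blue endpoints over all darts shows that at least
`(m - k₁) + k₂ ≥ m + k₂ - k₁` darts start at a blue vertex.
-/

open Finset

attribute [local instance] Classical.propDecidable

/-- The number of edges of `G` whose endpoints are all colored `c` by `f`. -/
noncomputable def monoEdges {V : Type*} [Fintype V] (G : SimpleGraph V)
    (f : V → Bool) (c : Bool) : ℕ :=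
  (G.edgeFinset.filter fun e => ∀ v ∈ e, f v = c).card

/-- The split reduction graph `H'`: a vertex `x_v` for each vertex `v` of `G`,
a vertex `y_e` for each edge `e` of `G` adjacent to the `x`-vertices of its two
endpoints, `m²` pendant leaves attached to each `y_e`, and all edges between
distinct `y`-vertices (so `Y` is a clique and `X ∪ Z` is independent). -/
noncomputable def splitRed {V : Type*} [Fintype V] (G : SimpleGraph V) :
    SimpleGraph (V ⊕ (↥G.edgeSet ⊕ ↥G.edgeSet × Fin (G.edgeFinset.card ^ 2))) where
  Adj x y :=
    match x, y with
    | .inl u, .inr (.inl e) => u ∈ (e : Sym2 V)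
    | .inr (.inl e), .inl u => u ∈ (e : Sym2 V)
    | .inr (.inl e), .inr (.inl e') => e ≠ e'
    | .inr (.inl e), .inr (.inr (e', _)) => e = e'
    | .inr (.inr (e', _)), .inr (.inl e) => e = e'
    | _, _ => False
  symm := ⟨by
    rintro (u | e | ⟨e, i⟩) (v | e' | ⟨e', j⟩) h <;> simp_all <;> exact h ∘ Eq.symm⟩
  loopless := ⟨by
    rintro (u | e | ⟨e, i⟩) h <;> simp_all⟩

theorem card_le_monoEdges {W : Type*} [Fintype W] (H : SimpleGraph W) (g : W → Bool)
    (c : Bool) {S : Finset (Sym2 W)} (hS : ∀ e ∈ S, e ∈ H.edgeSet ∧ ∀ v ∈ e, g v = c) :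
    #S ≤ monoEdges H g c :=
  card_le_card fun e he => by simpa using hS e he

namespace SimpleGraph

variable {V : Type*} [Fintype V] (G : SimpleGraph V)

theorem card_filter_edgeSet (P : Sym2 V → Prop) [DecidablePred P] :
    #{e : G.edgeSet | P e} = #{e ∈ G.edgeFinset | P e} := by
  rw [← card_map (Function.Embedding.subtype _)]
  congr 1
  ext e
  simp [and_comm]

theorem card_filter_dart_edge (P : Sym2 V → Prop) [DecidablePred P] :
    #{d : G.Dart | P d.edge} = 2 * #{e ∈ G.edgeFinset | P e} := by
  rw [card_eq_sum_card_fiberwise (f := Dart.edge) (t := {e ∈ G.edgeFinset | P e})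
    (fun d hd => by simpa using hd), mul_comm, ← sum_const_nat]
  intro e he
  rw [mem_filter, mem_edgeFinset] at he
  rw [filter_filter, ← G.dart_edge_fiber_card e he.1]
  congr 1
  ext d
  simp only [mem_filter, mem_univ, true_and, and_iff_right_iff_imp]
  rintro rfl
  exact he.2

theorem card_filter_dart_fst_eq_snd (P : V → Prop) [DecidablePred P] :
    #{d : G.Dart | P d.fst} = #{d : G.Dart | P d.snd} :=
  card_nbij' Dart.symm Dart.symm (fun d hd => by simpa using hd) (fun d hd => by simpa using hd)
    (fun d _ => d.symm_symm) (fun d _ => d.symm_symm)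

variable (f : V → Bool)

theorem card_filter_not_mono (c : Bool) :
    #{e ∈ G.edgeFinset | ¬ ∀ v ∈ e, f v = c} = #G.edgeFinset - monoEdges G f c := by
  rw [← card_filter_add_card_filter_not (s := G.edgeFinset) (fun e => ∀ v ∈ e, f v = c)]
  unfold monoEdges
  omega

theorem card_edgeFinset_sub_monoEdges_add_monoEdges_le :
    #G.edgeFinset - monoEdges G f true + monoEdges G f false ≤
      #{d : G.Dart | f d.fst = false} := by
  have endpoints : ∀ d : G.Dart,
      (if ¬ ∀ v ∈ d.edge, f v = true then 1 else 0) +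
          (if ∀ v ∈ d.edge, f v = false then 1 else 0) ≤
        (if f d.fst = false then 1 else 0) + (if f d.snd = false then 1 else 0) := by
    intro d
    simp only [Dart.edge, Sym2.mem_iff, forall_eq_or_imp, forall_eq]
    cases f d.fst <;> cases f d.snd <;> simp
  suffices 2 * (#G.edgeFinset - monoEdges G f true + monoEdges G f false) ≤
      2 * #{d : G.Dart | f d.fst = false} by omega
  calc 2 * (#G.edgeFinset - monoEdges G f true + monoEdges G f false)
      = #{d : G.Dart | ¬ ∀ v ∈ d.edge, f v = true} +
          #{d : G.Dart | ∀ v ∈ d.edge, f v = false} := by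
        rw [G.card_filter_dart_edge (fun e => ¬ ∀ v ∈ e, f v = true),
          G.card_filter_dart_edge (fun e => ∀ v ∈ e, f v = false), card_filter_not_mono,
          mul_add]
        rfl
    _ ≤ #{d : G.Dart | f d.fst = false} + #{d : G.Dart | f d.snd = false} := by
        simp only [card_filter, ← sum_add_distrib]
        exact sum_le_sum fun d _ => endpoints d
    _ = 2 * #{d : G.Dart | f d.fst = false} := by
        rw [← G.card_filter_dart_fst_eq_snd (fun v => f v = false), two_mul]

end SimpleGraph

namespace SplitReduction

variable {V : Type*} [Fintype V] {G : SimpleGraph V}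

abbrev Vertex (G : SimpleGraph V) :=
  V ⊕ (↥G.edgeSet ⊕ ↥G.edgeSet × Fin (G.edgeFinset.card ^ 2))

def coloring (f : V → Bool) (h : G.edgeSet → Bool) : Vertex G → Bool
  | .inl v => f v
  | .inr (.inl e) => h e
  | .inr (.inr (e, _)) => h e

def xyEdge (d : G.Dart) : Sym2 (Vertex G) := s(.inl d.fst, .inr (.inl ⟨d.edge, d.edge_mem⟩))

def yzEdge (p : G.edgeSet × Fin (G.edgeFinset.card ^ 2)) : Sym2 (Vertex G) :=
  s(.inr (.inl p.1), .inr (.inr p))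

def yyEdge (p : G.edgeSet × G.edgeSet) : Sym2 (Vertex G) := s(.inr (.inl p.1), .inr (.inl p.2))

theorem xyEdge_injective : Function.Injective (xyEdge (G := G)) := by
  intro d d' h
  simp only [xyEdge, Sym2.eq_iff, Sum.inl.injEq, Sum.inr.injEq, Subtype.mk.injEq, reduceCtorEq,
    and_false, or_false] at h
  obtain ⟨hfst, hedge⟩ := h
  rcases (G.dart_edge_eq_iff d d').1 hedge with h | rfl
  · exact h
  · exact absurd hfst d'.fst_ne_snd.symm

theorem yzEdge_injective : Function.Injective (yzEdge (G := G)) := by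
  intro p q h
  exact (by simpa [yzEdge] using h : _ ∧ p = q).2

theorem card_image_yyEdge_offDiag (A : Finset G.edgeSet) :
    #(A.offDiag.image yyEdge) = (#A).choose 2 := by
  have hy : Function.Injective (Sym2.map fun e : G.edgeSet => (.inr (.inl e) : Vertex G)) :=
    Sym2.map.injective fun _ _ h => by simpa using h
  rw [← Sym2.card_image_offDiag A, ← card_image_of_injective _ hy, image_image]
  rfl

theorem xyEdge_mem_edgeSet (d : G.Dart) : xyEdge d ∈ (splitRed G).edgeSet :=
  Sym2.mem_mk_left _ _

theorem yzEdge_mem_edgeSet (p : G.edgeSet × Fin (G.edgeFinset.card ^ 2)) :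
    yzEdge p ∈ (splitRed G).edgeSet :=
  rfl

theorem yyEdge_mem_edgeSet {p : G.edgeSet × G.edgeSet} (hp : p.1 ≠ p.2) :
    yyEdge p ∈ (splitRed G).edgeSet :=
  hp

variable (G) in
theorem le_monoEdges_coloring (f : V → Bool) (h : G.edgeSet → Bool) (c : Bool) :
    #{d : G.Dart | f d.fst = c ∧ h ⟨d.edge, d.edge_mem⟩ = c} +
        #{e | h e = c} * G.edgeFinset.card ^ 2 + (#{e | h e = c}).choose 2 ≤
      monoEdges (splitRed G) (coloring f h) c := by
  set D : Finset G.Dart := {d | f d.fst = c ∧ h ⟨d.edge, d.edge_mem⟩ = c}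
  set A : Finset G.edgeSet := {e | h e = c}
  have hxy_yz : Disjoint (D.image xyEdge) ((A ×ˢ univ).image yzEdge) := by
    simp [disjoint_left, xyEdge, yzEdge]
  have hxy_yy : Disjoint (D.image xyEdge) (A.offDiag.image yyEdge) := by
    simp [disjoint_left, xyEdge, yyEdge]
  have hyz_yy : Disjoint ((A ×ˢ univ).image yzEdge) (A.offDiag.image yyEdge) := by
    simp only [disjoint_left, mem_image]
    rintro _ ⟨p, -, rfl⟩ ⟨q, -, hq⟩
    simp [yzEdge, yyEdge] at hq
  calc #D + #A * G.edgeFinset.card ^ 2 + (#A).choose 2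
      = #(D.image xyEdge ∪ (A ×ˢ univ).image yzEdge ∪ A.offDiag.image yyEdge) := by
        rw [card_union_of_disjoint (disjoint_union_left.2 ⟨hxy_yy, hyz_yy⟩),
          card_union_of_disjoint hxy_yz, card_image_of_injective _ xyEdge_injective,
          card_image_of_injective _ yzEdge_injective, card_product, card_univ, Fintype.card_fin,
          card_image_yyEdge_offDiag]
    _ ≤ monoEdges (splitRed G) (coloring f h) c := by
        apply card_le_monoEdges
        simp only [mem_union, mem_image]
        rintro _ ((⟨d, hd, rfl⟩ | ⟨p, hp, rfl⟩) | ⟨p, hp, rfl⟩)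
        · simp only [D, mem_filter, mem_univ, true_and] at hd
          exact ⟨xyEdge_mem_edgeSet d, by simp [xyEdge, coloring, hd.1, hd.2]⟩
        · simp only [A, mem_product, mem_filter, mem_univ, true_and] at hp
          exact ⟨yzEdge_mem_edgeSet p, by simp [yzEdge, coloring, hp.1]⟩
        · simp only [A, mem_offDiag, mem_filter, mem_univ, true_and] at hp
          exact ⟨yyEdge_mem_edgeSet hp.2.2, by simp [yyEdge, coloring, hp.1, hp.2.1]⟩

variable (f : V → Bool)

noncomputable def edgeColor (e : G.edgeSet) : Bool := decide (∀ v ∈ (e : Sym2 V), f v = true)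

theorem card_edgeColor_true : #{e : G.edgeSet | edgeColor f e = true} = monoEdges G f true := by
  rw [monoEdges, ← G.card_filter_edgeSet]
  simp [edgeColor]

theorem card_edgeColor_false :
    #{e : G.edgeSet | edgeColor f e = false} = #G.edgeFinset - monoEdges G f true := by
  rw [← G.card_filter_not_mono f true, ← G.card_filter_edgeSet]
  simp [edgeColor]

theorem card_dart_edgeColor_true :
    #{d : G.Dart | f d.fst = true ∧ edgeColor f ⟨d.edge, d.edge_mem⟩ = true} =
      2 * monoEdges G f true := by
  rw [monoEdges, ← G.card_filter_dart_edge]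
  congr 1
  ext d
  simp only [edgeColor, decide_eq_true_eq, mem_filter, mem_univ, true_and, and_iff_right_iff_imp]
  exact fun h => h _ (Sym2.mem_mk_left _ _)

theorem le_card_dart_edgeColor_false :
    #G.edgeFinset - monoEdges G f true + monoEdges G f false ≤
      #{d : G.Dart | f d.fst = false ∧ edgeColor f ⟨d.edge, d.edge_mem⟩ = false} := by
  convert G.card_edgeFinset_sub_monoEdges_add_monoEdges_le f using 2
  ext d
  simp only [edgeColor, mem_filter, mem_univ, true_and, decide_eq_false_iff_not,
    and_iff_left_iff_imp]
  exact fun h hred => by simp [hred _ (Sym2.mem_mk_left _ _)] at h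

end SplitReduction

open SplitReduction in
theorem split_reduction_forward_general {V : Type*} [Fintype V] (G : SimpleGraph V)
    (k₁ k₂ : ℕ) (f : V → Bool)
    (hred : monoEdges G f true = k₁) (hblue : monoEdges G f false = k₂) :
    ∃ g : V ⊕ (↥G.edgeSet ⊕ ↥G.edgeSet × Fin (G.edgeFinset.card ^ 2)) → Bool,
      monoEdges (splitRed G) g true ≥
        2 * k₁ + G.edgeFinset.card ^ 2 * k₁ + k₁.choose 2 ∧
      monoEdges (splitRed G) g false ≥
        (G.edgeFinset.card + k₂ - k₁) +
          (G.edgeFinset.card - k₁) * G.edgeFinset.card ^ 2 +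
          (G.edgeFinset.card - k₁).choose 2 := by
  refine ⟨coloring f (edgeColor f), ?_, ?_⟩
  · have red := le_monoEdges_coloring G f (edgeColor f) true
    rwa [card_dart_edgeColor_true, card_edgeColor_true, hred, mul_comm k₁] at red
  · have blue := le_monoEdges_coloring G f (edgeColor f) false
    have darts := le_card_dart_edgeColor_false f (G := G)
    rw [card_edgeColor_false, hred] at blue
    rw [hred, hblue] at darts
    omega

theorem split_reduction_forward {V : Type*} [Fintype V] (G : SimpleGraph V)
    (k₁ k₂ : ℕ) (hkm : k₁ + k₂ ≤ G.edgeFinset.card) (f : V → Bool)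
    (hred : monoEdges G f true = k₁) (hblue : monoEdges G f false = k₂) :
    ∃ g : V ⊕ (↥G.edgeSet ⊕ ↥G.edgeSet × Fin (G.edgeFinset.card ^ 2)) → Bool,
      monoEdges (splitRed G) g true ≥
        2 * k₁ + G.edgeFinset.card ^ 2 * k₁ + k₁.choose 2 ∧
      monoEdges (splitRed G) g false ≥
        (G.edgeFinset.card + k₂ - k₁) +
          (G.edgeFinset.card - k₁) * G.edgeFinset.card ^ 2 +
          (G.edgeFinset.card - k₁).choose 2 :=
  split_reduction_forward_general G k₁ k₂ f hred hblue
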